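/- For any symmetric positive definite matrices Q₁, Q₂ ∈ ℝ^{n×n}, centers q₁, q₂ ∈ ℝ^n, and any λ ∈ (0,1), the Minkowski sum of the ellipsoids E(q₁,Q₁) and E(q₂,Q₂) is contained in the ellipsoid E(q₁+q₂, Q₁/λ + Q₂/(1−λ)). -/

import Mathlib

open Matrix Set Pointwise
attribute [local instance] Matrix.linftyOpNormedAddCommGroup Matrix.linftyOpNormedSpace
  Matrix.linftyOpNormedRing Matrix.linftyOpNormedAlgebra

/-- Matrix exponential over ℝ. -/
noncomputable def mexp {n : ℕ} (A : Matrix (Fin n) (Fin n) ℝ) : Matrix (Fin n) (Fin n) ℝ :=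
  NormedSpace.exp A

/-- Square root of a positive semidefinite matrix (as in the older Mathlib). -/
noncomputable def Matrix.PosSemidef.sqrt {m : Type*} [Fintype m] [DecidableEq m]
    {A : Matrix m m ℝ} (hA : A.PosSemidef) : Matrix m m ℝ :=
  hA.1.eigenvectorUnitary.1 * diagonal ((↑) ∘ (Real.sqrt ∘ hA.1.eigenvalues)) *
    (star hA.1.eigenvectorUnitary : Matrix m m ℝ)

/-- The ellipsoid `E(q,Q) = {q + Q^{1/2} v : vᵀv ≤ 1}` for `Q` positive semidefinite. -/
noncomputable def ellipsoid {n : ℕ} (q : Fin n → ℝ) {Q : Matrix (Fin n) (Fin n) ℝ}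
    (hQ : Q.PosSemidef) : Set (Fin n → ℝ) :=
  {x | ∃ v : Fin n → ℝ, v ⬝ᵥ v ≤ 1 ∧ x = q + hQ.sqrt *ᵥ v}

/-! The support function of `E(q, Q)` in direction `u` is `u ⬝ᵥ q + √(uᵀQu)`, and for `Q ≻ 0`
these half-space bounds characterise membership. Support functions add under Minkowski sums, and
`√a + √b ≤ √(a/λ + b/(1-λ))` is Sedrakyan's form of Cauchy–Schwarz. -/

theorem Real.sqrt_add_sqrt_le_sqrt_inv_mul_add {a b lam : ℝ} (ha : 0 ≤ a) (hb : 0 ≤ b)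
    (hlam : lam ∈ Ioo (0 : ℝ) 1) : √a + √b ≤ √(lam⁻¹ * a + (1 - lam)⁻¹ * b) := by
  obtain ⟨hl, hl1⟩ := hlam
  have hl' : 0 < 1 - lam := sub_pos.2 hl1
  have titu := Finset.sq_sum_div_le_sum_sq_div Finset.univ ![√a, √b] (g := ![lam, 1 - lam])
    (by simp [Fin.forall_fin_two, hl, hl'])
  simp only [Fin.sum_univ_two, Matrix.cons_val_zero, Matrix.cons_val_one, add_sub_cancel,
    div_one, Real.sq_sqrt ha, Real.sq_sqrt hb] at titu
  refine Real.le_sqrt_of_sq_le (titu.trans_eq ?_)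
  simp only [div_eq_inv_mul]

theorem Matrix.dotProduct_le_sqrt_mul_sqrt {m : Type*} [Fintype m] (x y : m → ℝ) :
    x ⬝ᵥ y ≤ √(x ⬝ᵥ x) * √(y ⬝ᵥ y) := by
  simpa [dotProduct, sq] using Real.sum_mul_le_sqrt_mul_sqrt Finset.univ x y

theorem Matrix.IsHermitian.dotProduct_mulVec_comm {m : Type*} [Fintype m]
    {M : Matrix m m ℝ} (hM : M.IsHermitian) (x y : m → ℝ) :
    x ⬝ᵥ (M *ᵥ y) = (M *ᵥ x) ⬝ᵥ y := by
  rw [dotProduct_mulVec, ← mulVec_transpose, (isHermitian_iff_isSymm.1 hM).eq]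

namespace Matrix.PosSemidef

variable {m : Type*} [Fintype m] [DecidableEq m] {A : Matrix m m ℝ}

theorem posSemidef_sqrt (hA : A.PosSemidef) : hA.sqrt.PosSemidef := by
  have hD : (diagonal ((↑) ∘ (Real.sqrt ∘ hA.1.eigenvalues)) : Matrix m m ℝ).PosSemidef :=
    PosSemidef.diagonal fun i => by simp [Real.sqrt_nonneg]
  simpa [PosSemidef.sqrt, star_eq_conjTranspose] using
    hD.conjTranspose_mul_mul_same (star (hA.1.eigenvectorUnitary : Matrix m m ℝ))

theorem sqrt_mul_self (hA : A.PosSemidef) : hA.sqrt * hA.sqrt = A := by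
  set U : Matrix m m ℝ := hA.1.eigenvectorUnitary.1
  set D : Matrix m m ℝ := diagonal ((↑) ∘ (Real.sqrt ∘ hA.1.eigenvalues))
  have hU : star U * U = 1 := Unitary.coe_star_mul_self _
  have hD : D * D = diagonal ((↑) ∘ hA.1.eigenvalues) := by
    rw [diagonal_mul_diagonal]
    congr 1
    funext i
    simp [Real.mul_self_sqrt (hA.eigenvalues_nonneg i)]
  have hspec := hA.1.spectral_theorem
  rw [Unitary.conjStarAlgAut_apply] at hspec
  calc hA.sqrt * hA.sqrt = U * (D * (star U * U) * D) * star U := by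
        simp only [PosSemidef.sqrt, U, D, Matrix.mul_assoc]
    _ = A := by rw [hU, Matrix.mul_one, hD]; exact hspec.symm

theorem sqrt_mulVec_dotProduct_self (hA : A.PosSemidef) (u : m → ℝ) :
    (hA.sqrt *ᵥ u) ⬝ᵥ (hA.sqrt *ᵥ u) = u ⬝ᵥ (A *ᵥ u) := by
  rw [← hA.posSemidef_sqrt.1.dotProduct_mulVec_comm, mulVec_mulVec, hA.sqrt_mul_self]

theorem dotProduct_sqrt_mulVec_le (hA : A.PosSemidef) (u : m → ℝ) {v : m → ℝ}
    (hv : v ⬝ᵥ v ≤ 1) : u ⬝ᵥ (hA.sqrt *ᵥ v) ≤ √(u ⬝ᵥ (A *ᵥ u)) :=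
  calc u ⬝ᵥ (hA.sqrt *ᵥ v) = (hA.sqrt *ᵥ u) ⬝ᵥ v :=
        hA.posSemidef_sqrt.1.dotProduct_mulVec_comm u v
    _ ≤ √((hA.sqrt *ᵥ u) ⬝ᵥ (hA.sqrt *ᵥ u)) * √(v ⬝ᵥ v) :=
        dotProduct_le_sqrt_mul_sqrt _ _
    _ ≤ √(u ⬝ᵥ (A *ᵥ u)) := by
        rw [hA.sqrt_mulVec_dotProduct_self]
        exact mul_le_of_le_one_right (Real.sqrt_nonneg _) (Real.sqrt_le_one.2 hv)

end Matrix.PosSemidef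

section Ellipsoid

variable {n : ℕ} {q x : Fin n → ℝ} {Q : Matrix (Fin n) (Fin n) ℝ}

theorem dotProduct_sub_le_of_mem_ellipsoid (hQ : Q.PosSemidef) (hx : x ∈ ellipsoid q hQ)
    (u : Fin n → ℝ) : u ⬝ᵥ (x - q) ≤ √(u ⬝ᵥ (Q *ᵥ u)) := by
  obtain ⟨v, hv, rfl⟩ := hx
  simpa using hQ.dotProduct_sqrt_mulVec_le u hv

theorem mem_ellipsoid_of_forall_dotProduct_sub_le (hQ : Q.PosDef)
    (h : ∀ u, u ⬝ᵥ (x - q) ≤ √(u ⬝ᵥ (Q *ᵥ u))) : x ∈ ellipsoid q hQ.posSemidef := by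
  -- test the bound at `u = Q⁻¹ (x - q)`: with `t = uᵀQu = ‖Q^{1/2} u‖²` it reads `t ≤ √t`
  obtain ⟨u, hu⟩ := mulVec_surjective_iff_isUnit.2 hQ.isUnit (x - q)
  set R := hQ.posSemidef.sqrt
  set t := u ⬝ᵥ (Q *ᵥ u)
  have ht : t ≤ √t := by simpa [t, hu] using h u
  have ht0 : 0 ≤ t := by simpa using hQ.posSemidef.dotProduct_mulVec_nonneg u
  have ht1 : t ≤ 1 := by nlinarith [Real.sq_sqrt ht0, Real.sqrt_nonneg t]
  refine ⟨R *ᵥ u, ?_, ?_⟩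
  · rwa [hQ.posSemidef.sqrt_mulVec_dotProduct_self]
  · rw [mulVec_mulVec, hQ.posSemidef.sqrt_mul_self, hu, add_sub_cancel]

end Ellipsoid

/-- `E(q₁,Q₁) ⊕ E(q₂,Q₂) ⊆ E(q₁+q₂, Q₁/λ + Q₂/(1−λ))` for `λ ∈ (0,1)`. -/
theorem minkowski_sum_ellipsoid_subset {n : ℕ} (Q₁ Q₂ : Matrix (Fin n) (Fin n) ℝ)
    (h1 : Q₁.PosDef) (h2 : Q₂.PosDef) (q₁ q₂ : Fin n → ℝ)
    (lam : ℝ) (hlam : lam ∈ Set.Ioo (0:ℝ) 1)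
    (hS : (lam⁻¹ • Q₁ + (1 - lam)⁻¹ • Q₂).PosSemidef) :
    ellipsoid q₁ h1.posSemidef + ellipsoid q₂ h2.posSemidef ⊆ ellipsoid (q₁ + q₂) hS := by
  have hSpd : (lam⁻¹ • Q₁ + (1 - lam)⁻¹ • Q₂).PosDef :=
    (h1.smul (inv_pos.2 hlam.1)).add (h2.smul (inv_pos.2 (sub_pos.2 hlam.2)))
  rintro _ ⟨x₁, hx₁, x₂, hx₂, rfl⟩
  refine mem_ellipsoid_of_forall_dotProduct_sub_le hSpd fun u => ?_
  calc u ⬝ᵥ (x₁ + x₂ - (q₁ + q₂)) = u ⬝ᵥ (x₁ - q₁) + u ⬝ᵥ (x₂ - q₂) := by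
        rw [← dotProduct_add, add_sub_add_comm]
    _ ≤ √(u ⬝ᵥ (Q₁ *ᵥ u)) + √(u ⬝ᵥ (Q₂ *ᵥ u)) :=
        add_le_add (dotProduct_sub_le_of_mem_ellipsoid _ hx₁ u)
          (dotProduct_sub_le_of_mem_ellipsoid _ hx₂ u)
    _ ≤ √(lam⁻¹ * (u ⬝ᵥ (Q₁ *ᵥ u)) + (1 - lam)⁻¹ * (u ⬝ᵥ (Q₂ *ᵥ u))) :=
        Real.sqrt_add_sqrt_le_sqrt_inv_mul_add (h1.posSemidef.dotProduct_mulVec_nonneg u)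
          (h2.posSemidef.dotProduct_mulVec_nonneg u) hlam
    _ = √(u ⬝ᵥ ((lam⁻¹ • Q₁ + (1 - lam)⁻¹ • Q₂) *ᵥ u)) := by
        simp only [add_mulVec, smul_mulVec, dotProduct_add, dotProduct_smul, smul_eq_mul]
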